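/- If G and H are Dehn–Sommerville finite abstract simplicial complexes on disjoint vertex sets, of dimensions p and q respectively, then their join G + H is Dehn–Sommerville (of dimension p + q + 1). -/
import Mathlib


open Finset Polynomial

namespace SphereFormula

variable {V : Type} [DecidableEq V]

/-- A finite abstract simplicial complex: a finite collection of nonempty finite sets
that is closed under taking nonempty subsets. -/
def IsComplex (G : Finset (Finset V)) : Prop :=
  ∀ x ∈ G, x.Nonempty ∧ ∀ y, y ⊆ x → y.Nonempty → y ∈ G

/-- `w x = (-1)^(dim x)` where `dim x = |x| - 1`. -/
def w (x : Finset V) : ℤ := (-1) ^ (x.card - 1)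

/-- Euler characteristic of a finite set of simplices: `χ(A) = Σ_{x ∈ A} w x`. -/
def chi (A : Finset (Finset V)) : ℤ := ∑ x ∈ A, w x

/-- The star `U(x) = {y ∈ G : x ⊆ y}`. -/
def star (G : Finset (Finset V)) (x : Finset V) : Finset (Finset V) :=
  G.filter fun y => x ⊆ y

/-- The unit ball `B(x) = {z ∈ G : z ⊆ y for some y ∈ U(x)}` (closure of the star). -/
def ball (G : Finset (Finset V)) (x : Finset V) : Finset (Finset V) :=
  G.filter fun z => ∃ y ∈ G, x ⊆ y ∧ z ⊆ y

/-- The unit sphere `S(x) = B(x) \ U(x)`. -/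
def sphere (G : Finset (Finset V)) (x : Finset V) : Finset (Finset V) :=
  ball G x \ star G x

/-- The vertex set of `G`: those `v` with `{v} ∈ G`. -/
def verts (G : Finset (Finset V)) : Finset V :=
  (G.biUnion id).filter fun v => {v} ∈ G

/-- Contractibility, defined inductively: a single vertex complex is contractible, and `G`
is contractible if there is `x ∈ G` with both `S(x)` and `G \ U(x)` contractible. -/
inductive Contractible : Finset (Finset V) → Prop where
  | point (v : V) : Contractible ({({v} : Finset V)} : Finset (Finset V))
  | step (G : Finset (Finset V)) (x : Finset V) (hx : x ∈ G)
      (hS : Contractible (sphere G x)) (hG : Contractible (G \ star G x)) :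
      Contractible G

mutual
  /-- `G` is a `d`-manifold (`d ≥ 0`): every unit sphere `S(x)` is a `(d-1)`-sphere. -/
  inductive IsManifold : ℤ → Finset (Finset V) → Prop where
    | mk (d : ℤ) (G : Finset (Finset V)) (hd : 0 ≤ d)
        (h : ∀ x ∈ G, IsSphere (d - 1) (sphere G x)) : IsManifold d G

  /-- `d`-spheres: the empty complex is the `(-1)`-sphere, and a `d`-sphere is a
  `d`-manifold `G` such that `G \ U(x)` is contractible for some `x ∈ G`. -/
  inductive IsSphere : ℤ → Finset (Finset V) → Prop where
    | empty : IsSphere (-1) (∅ : Finset (Finset V))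
    | mk (d : ℤ) (G : Finset (Finset V)) (hm : IsManifold d G)
        (h : ∃ x ∈ G, Contractible (G \ star G x)) : IsSphere d G
end

/-- The f-function `f_G(t) = 1 + Σ_{k ≥ 0} f_k(G) t^(k+1) = 1 + Σ_{x ∈ G} t^|x|`. -/
noncomputable def fPoly (G : Finset (Finset V)) : Polynomial ℚ :=
  1 + ∑ x ∈ G, Polynomial.X ^ x.card

/-- `F_H(t) = ∫_0^t f_H(s) ds = t + Σ_{k ≥ 0} f_k(H) t^(k+2)/(k+2)`. -/
noncomputable def FPoly (H : Finset (Finset V)) : Polynomial ℚ :=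
  Polynomial.X +
    ∑ x ∈ H, Polynomial.C (((x.card : ℚ) + 1)⁻¹) * Polynomial.X ^ (x.card + 1)

/-- The join `G + H = G ∪ H ∪ {x ∪ y : x ∈ G, y ∈ H}`. -/
def joinC (G H : Finset (Finset V)) : Finset (Finset V) :=
  G ∪ H ∪ (G ×ˢ H).image fun p => p.1 ∪ p.2

/-- The barycentric refinement: simplices are the nonempty chains in `(G, ⊆)`. -/
def bary (G : Finset (Finset V)) : Finset (Finset (Finset V)) :=
  G.powerset.filter fun c => c.Nonempty ∧ ∀ x ∈ c, ∀ y ∈ c, x ⊆ y ∨ y ⊆ x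

/-- `f` is locally injective: distinct vertices of a common simplex have distinct values. -/
def LocallyInjective (G : Finset (Finset V)) (f : V → ℤ) : Prop :=
  ∀ x ∈ G, ∀ v ∈ x, ∀ u ∈ x, v ≠ u → f v ≠ f u

theorem fPoly_joinC_aux {V : Type} [DecidableEq V] (G H : Finset (Finset V))
    (hG : IsComplex G) (hH : IsComplex H)
    (hdisj : Disjoint (G.biUnion id) (H.biUnion id)) :
    fPoly (joinC G H) = fPoly G * fPoly H := by
  have hsub : ∀ x ∈ G, x ⊆ G.biUnion id := fun x hx => Finset.subset_biUnion_of_mem id hx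
  have hsub' : ∀ y ∈ H, y ⊆ H.biUnion id := fun y hy => Finset.subset_biUnion_of_mem id hy
  have hdxy : ∀ x ∈ G, ∀ y ∈ H, Disjoint x y := fun x hx y hy =>
    hdisj.mono (hsub x hx) (hsub' y hy)
  have hGH : Disjoint G H := by
    rw [Finset.disjoint_left]
    intro x hxG hxH
    obtain ⟨⟨v, hv⟩, -⟩ := hG x hxG
    exact ((hdxy x hxG x hxH).forall_ne_finset hv hv) rfl
  have hGim : Disjoint (G ∪ H) ((G ×ˢ H).image fun p => p.1 ∪ p.2) := by
    rw [Finset.disjoint_right]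
    intro z hz hz'
    simp only [Finset.mem_image, Finset.mem_product] at hz
    obtain ⟨⟨x, y⟩, ⟨hx, hy⟩, rfl⟩ := hz
    obtain ⟨⟨vx, hvx⟩, -⟩ := hG x hx
    obtain ⟨⟨vy, hvy⟩, -⟩ := hH y hy
    rcases Finset.mem_union.mp hz' with h | h
    · have : vy ∈ G.biUnion id := hsub _ h (Finset.mem_union_right _ hvy)
      exact (Finset.disjoint_left.mp hdisj this) (hsub' y hy hvy)
    · have : vx ∈ H.biUnion id := hsub' _ h (Finset.mem_union_left _ hvx)
      exact (Finset.disjoint_left.mp hdisj (hsub x hx hvx)) this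
  have hinj : ∀ p ∈ G ×ˢ H, ∀ q ∈ G ×ˢ H,
      (fun p : Finset V × Finset V => p.1 ∪ p.2) p
        = (fun p : Finset V × Finset V => p.1 ∪ p.2) q → p = q := by
    rintro ⟨x1, y1⟩ hp ⟨x2, y2⟩ hq h
    simp only [Finset.mem_product] at hp hq
    simp only at h
    have key : ∀ (a b c d : Finset V), a ∈ G → b ∈ H → c ∈ G → d ∈ H →
        a ∪ b = c ∪ d → a ⊆ c := by
      intro a b c d ha hb hc hd hab
      intro v hv
      have hvG : v ∈ G.biUnion id := hsub a ha hv
      have : v ∈ c ∪ d := hab ▸ Finset.mem_union_left _ hv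
      rcases Finset.mem_union.mp this with h' | h'
      · exact h'
      · exact absurd (hsub' d hd h') (fun hh => Finset.disjoint_left.mp hdisj hvG hh)
    have key' : ∀ (a b c d : Finset V), a ∈ G → b ∈ H → c ∈ G → d ∈ H →
        a ∪ b = c ∪ d → b ⊆ d := by
      intro a b c d ha hb hc hd hab
      intro v hv
      have hvH : v ∈ H.biUnion id := hsub' b hb hv
      have : v ∈ c ∪ d := hab ▸ Finset.mem_union_right _ hv
      rcases Finset.mem_union.mp this with h' | h'
      · exact absurd (hsub c hc h') (fun hh => Finset.disjoint_left.mp hdisj hh hvH)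
      · exact h'
    have hx : x1 = x2 := Finset.Subset.antisymm
      (key x1 y1 x2 y2 hp.1 hp.2 hq.1 hq.2 h)
      (key x2 y2 x1 y1 hq.1 hq.2 hp.1 hp.2 h.symm)
    have hy : y1 = y2 := Finset.Subset.antisymm
      (key' x1 y1 x2 y2 hp.1 hp.2 hq.1 hq.2 h)
      (key' x2 y2 x1 y1 hq.1 hq.2 hp.1 hp.2 h.symm)
    simp [hx, hy]
  unfold fPoly joinC
  rw [Finset.sum_union hGim, Finset.sum_union hGH, Finset.sum_image hinj,
    Finset.sum_product]
  have hcard : ∀ x ∈ G, ∀ y ∈ H,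
      (Polynomial.X : Polynomial ℚ) ^ (x ∪ y).card = X ^ x.card * X ^ y.card := by
    intro x hx y hy
    rw [Finset.card_union_of_disjoint (hdxy x hx y hy), pow_add]
  calc 1 + ((∑ x ∈ G, (X : Polynomial ℚ) ^ x.card) + ∑ y ∈ H, X ^ y.card
        + ∑ x ∈ G, ∑ y ∈ H, X ^ (x ∪ y).card)
      = 1 + ((∑ x ∈ G, (X : Polynomial ℚ) ^ x.card) + ∑ y ∈ H, X ^ y.card
        + ∑ x ∈ G, ∑ y ∈ H, X ^ x.card * X ^ y.card) := by
        congr 2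
        exact Finset.sum_congr rfl fun x hx =>
          Finset.sum_congr rfl fun y hy => hcard x hx y hy
    _ = (1 + ∑ x ∈ G, X ^ x.card) * (1 + ∑ y ∈ H, X ^ y.card) := by
        rw [← Finset.sum_mul_sum]; ring

/-- the join of Dehn–Sommerville complexes of dimensions `p` and `q` on
disjoint vertex sets is Dehn–Sommerville (of dimension `p + q + 1`). -/
theorem join_dehn_sommerville {V : Type} [DecidableEq V] (G H : Finset (Finset V))
    (hG : IsComplex G) (hH : IsComplex H)
    (hdisj : Disjoint (G.biUnion id) (H.biUnion id)) (p q : ℕ)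
    (hp : ∀ x ∈ G, x.card ≤ p + 1) (hp' : ∃ x ∈ G, x.card = p + 1)
    (hq : ∀ x ∈ H, x.card ≤ q + 1) (hq' : ∃ x ∈ H, x.card = q + 1)
    (hGDS : (fPoly G).comp (-1 - Polynomial.X) = (-1) ^ (p + 1) * fPoly G)
    (hHDS : (fPoly H).comp (-1 - Polynomial.X) = (-1) ^ (q + 1) * fPoly H) :
    (fPoly (joinC G H)).comp (-1 - Polynomial.X)
      = (-1) ^ (p + q + 2) * fPoly (joinC G H) := by
  rw [fPoly_joinC_aux G H hG hH hdisj, Polynomial.mul_comp, hGDS, hHDS]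
  ring

end SphereFormula
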